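/- In ℝ², for a fixed unit vector θ₂, ∫_S |θ₁ - θ₂| θ₁ dθ₁ = -(8/3) θ₂, and consequently ∫_S ∫_S |θ₁-θ₂| θ₁ (θ₂·w) dθ₁ dθ₂ = -(8/3) ∫_S θ₂ (θ₂·w) dθ₂ = -(8π/3) w for any w ∈ ℝ². -/

import Mathlib

open MeasureTheory Metric Real
open scoped RealInnerProductSpace

open Set intervalIntegral

/-!
Both identities are reduced to integrals over the angle. The measure `toSphere` on the unit circle
is arc length: compute `∫ φ(‖x‖) g(x / ‖x‖) dx` once through the polar decomposition of Haar measure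
that defines `toSphere` and once through planar polar coordinates, with a cut-off `φ` of nonzero
radial moment.

Parametrising `θ₁ = cos s • θ₂ + sin s • θ₂^⊥`, the chord length is `|θ₁ - θ₂| = 2 sin (s / 2)`
for `s ∈ [0, 2π]`, so the first integral is
`(∫ 2 sin(s/2) cos s ds) θ₂ + (∫ 2 sin(s/2) sin s ds) θ₂^⊥ = -(8/3) θ₂`.
By the first identity the double integral is `-(8/3) ∫ ⟪θ, w⟫ θ dθ`, and `∫ ⟪θ, w⟫ θ dθ = π w`:
this integral does not change under a quarter turn, and `⟪θ, w⟫ θ + ⟪θ^⊥, w⟫ θ^⊥ = w`.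
-/

noncomputable section

variable {F : Type*} [NormedAddCommGroup F] [NormedSpace ℝ F]

section RadialAngular

variable {E : Type*} [NormedAddCommGroup E] [NormedSpace ℝ E] [MeasurableSpace E]
  [BorelSpace E] [FiniteDimensional ℝ E] [Nontrivial E]

theorem integral_volumeIoiPow (n : ℕ) (f : ℝ → F) :
    ∫ r : Ioi (0 : ℝ), f r ∂Measure.volumeIoiPow n = ∫ r in Ioi 0, r ^ n • f r := by
  simp only [Measure.volumeIoiPow, ENNReal.ofReal]
  rw [integral_withDensity_eq_integral_smul (measurable_subtype_coe.pow_const _).real_toNNReal,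
    integral_subtype_comap measurableSet_Ioi fun r ↦ Real.toNNReal (r ^ n) • f r]
  refine setIntegral_congr_fun measurableSet_Ioi fun r hr ↦ ?_
  rw [NNReal.smul_def, Real.coe_toNNReal _ (pow_nonneg hr.out.le _)]

theorem integral_fun_norm_smul_comp_normalize (μ : Measure E) [μ.IsAddHaarMeasure]
    (φ : ℝ → ℝ) (g : E → F) :
    ∫ x, φ ‖x‖ • g (‖x‖⁻¹ • x) ∂μ =
      (∫ r in Ioi 0, r ^ (Module.finrank ℝ E - 1) * φ r) • ∫ θ, g θ ∂μ.toSphere := by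
  calc ∫ x, φ ‖x‖ • g (‖x‖⁻¹ • x) ∂μ
      = ∫ x : ({0}ᶜ : Set E), φ ‖x.1‖ • g (‖x.1‖⁻¹ • x.1) ∂μ.comap (↑) := by
        rw [integral_subtype_comap (measurableSet_singleton _).compl
          fun x ↦ φ ‖x‖ • g (‖x‖⁻¹ • x), restrict_compl_singleton]
    _ = ∫ z, φ z.2 • g z.1 ∂μ.toSphere.prod (.volumeIoiPow (Module.finrank ℝ E - 1)) := by
        simpa using μ.measurePreserving_homeomorphUnitSphereProd.integral_comp
          (Homeomorph.measurableEmbedding _) fun z ↦ φ z.2 • g z.1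
    _ = ∫ z, φ z.1 • g z.2 ∂(Measure.volumeIoiPow (Module.finrank ℝ E - 1)).prod μ.toSphere :=
        (integral_prod_swap _).symm
    _ = _ := by
        rw [integral_prod_smul (𝕜 := ℝ) (fun r : Ioi (0 : ℝ) ↦ φ r)
          fun θ : sphere (0 : E) 1 ↦ g θ, integral_volumeIoiPow]
        rfl

end RadialAngular

theorem Function.Periodic.intervalIntegral_comp_add_right {f : ℝ → F} {T : ℝ}
    (hf : Function.Periodic f T) (t u s : ℝ) :
    ∫ x in u..u + T, f (x + s) = ∫ x in t..t + T, f x := by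
  rw [integral_comp_add_right, add_right_comm]
  exact hf.intervalIntegral_add_eq _ _

local notation "ℝ²" => EuclideanSpace ℝ (Fin 2)

def circleVec (s : ℝ) : ℝ² := !₂[cos s, sin s]

@[simp]
theorem circleVec_apply_zero (s : ℝ) : circleVec s 0 = cos s := rfl

@[simp]
theorem circleVec_apply_one (s : ℝ) : circleVec s 1 = sin s := rfl

theorem norm_circleVec (s : ℝ) : ‖circleVec s‖ = 1 := by
  simp [EuclideanSpace.norm_eq, Fin.sum_univ_two]

@[fun_prop]
theorem continuous_circleVec : Continuous circleVec :=
  (PiLp.continuous_toLp 2 _).comp <| continuous_pi fun i ↦ by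
    fin_cases i
    exacts [continuous_cos, continuous_sin]

theorem periodic_circleVec : Function.Periodic circleVec (2 * π) := fun s ↦ by
  simp [circleVec]

theorem circleVec_add (s t : ℝ) :
    circleVec (s + t) = cos s • circleVec t + sin s • circleVec (t + π / 2) := by
  ext i; fin_cases i <;> simp [cos_add, sin_add] <;> ring

theorem norm_circleVec_sub (s t : ℝ) : ‖circleVec s - circleVec t‖ = 2 * |sin ((s - t) / 2)| := by
  have hhalf := sin_sq_eq_half_sub ((s - t) / 2)
  rw [mul_div_cancel₀ _ two_ne_zero, cos_sub] at hhalf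
  have hsq : ‖circleVec s - circleVec t‖ ^ 2 = (2 * sin ((s - t) / 2)) ^ 2 := by
    rw [EuclideanSpace.norm_sq_eq, Fin.sum_univ_two]
    simp only [PiLp.sub_apply, circleVec_apply_zero, circleVec_apply_one, norm_eq_abs, sq_abs]
    nlinarith [sin_sq_add_cos_sq s, sin_sq_add_cos_sq t]
  have h2 : 2 * |sin ((s - t) / 2)| = |2 * sin ((s - t) / 2)| := by rw [abs_mul, abs_two]
  rw [h2, ← sq_eq_sq₀ (norm_nonneg _) (abs_nonneg _), sq_abs, hsq]

theorem exists_eq_circleVec {θ : ℝ²} (hθ : θ ∈ sphere (0 : ℝ²) 1) : ∃ α, θ = circleVec α := by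
  set z : ℂ := ⟨θ 0, θ 1⟩
  have hz : ‖z‖ = 1 := by
    rw [mem_sphere_zero_iff_norm, EuclideanSpace.norm_eq, Fin.sum_univ_two] at hθ
    rw [Complex.norm_def, Complex.normSq_apply]
    simpa [← sq] using hθ
  refine ⟨z.arg, ?_⟩
  ext i; fin_cases i
  · simp [Complex.cos_arg (norm_ne_zero_iff.mp (hz.trans_ne one_ne_zero)), hz, z]
  · simp [Complex.sin_arg, hz, z]

theorem integral_fun_norm_smul_comp_normalize_polar (φ : ℝ → ℝ) (g : ℝ² → F) :
    ∫ x : ℝ², φ ‖x‖ • g (‖x‖⁻¹ • x) =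
      (∫ r in Ioi 0, r * φ r) • ∫ s in -π..π, g (circleVec s) := by
  set e := MeasurableEquiv.finTwoArrow.symm.trans (MeasurableEquiv.toLp 2 (Fin 2 → ℝ))
  have he : MeasurePreserving e :=
    (PiLp.volume_preserving_toLp (Fin 2)).comp (volume_preserving_finTwoArrow ℝ).symm
  have hpolar : ∀ p ∈ polarCoord.target,
      p.1 • φ ‖e (polarCoord.symm p)‖ • g (‖e (polarCoord.symm p)‖⁻¹ • e (polarCoord.symm p)) =
        (p.1 * φ p.1) • g (circleVec p.2) := by
    rintro ⟨r, s⟩ ⟨hr, -⟩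
    have hr : (0 : ℝ) < r := hr
    have hvec : e (polarCoord.symm (r, s)) = r • circleVec s := by
      ext i; fin_cases i <;> simp [e, polarCoord_symm_apply, circleVec]
    simp only [hvec, norm_smul, norm_circleVec, norm_eq_abs, abs_of_pos hr, mul_one, smul_smul,
      inv_mul_cancel₀ hr.ne', one_smul]
  rw [← he.integral_comp', ← integral_comp_polarCoord_symm,
    setIntegral_congr_fun polarCoord.open_target.measurableSet hpolar, polarCoord_target,
    Measure.volume_eq_prod, ← Measure.prod_restrict,
    integral_prod_smul (𝕜 := ℝ) (fun r ↦ r * φ r) fun s ↦ g (circleVec s),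
    integral_of_le (by linarith [pi_pos]), integral_Ioc_eq_integral_Ioo]

theorem integral_mul_indicator_Iio_one : ∫ r in Ioi (0 : ℝ), r * (Iio 1).indicator 1 r = 1 / 2 := by
  have h : (fun r : ℝ ↦ r * (Iio 1).indicator 1 r) = (Iio 1).indicator id := by
    ext r; simp [indicator_apply]
  rw [h, MeasureTheory.integral_indicator measurableSet_Iio,
    Measure.restrict_restrict measurableSet_Iio, Iio_inter_Ioi, ← integral_Ioc_eq_integral_Ioo,
    ← integral_of_le zero_le_one]
  norm_num [integral_id]

theorem integral_toSphere_eq_intervalIntegral (g : ℝ² → F) :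
    ∫ θ, g θ ∂(volume : Measure ℝ²).toSphere = ∫ s in (0)..2 * π, g (circleVec s) := by
  have h := integral_fun_norm_smul_comp_normalize volume ((Iio 1).indicator 1) g
  simp only [integral_fun_norm_smul_comp_normalize_polar, finrank_euclideanSpace_fin,
    Nat.add_one_sub_one, pow_one, integral_mul_indicator_Iio_one] at h
  rw [← smul_right_injective F (by norm_num) h]
  have := (periodic_circleVec.comp g).intervalIntegral_add_eq (-π) 0
  simpa [show -π + 2 * π = π by ring] using this

theorem integral_two_mul_sin_half_mul_cos :
    ∫ s in (0)..2 * π, 2 * sin (s / 2) * cos s = -(8 / 3) := by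
  have h : ∀ s : ℝ, 2 * sin (s / 2) * cos s = sin (3 / 2 * s) - sin (1 / 2 * s) := fun s ↦ by
    rw [show 3 / 2 * s = s + s / 2 by ring, show 1 / 2 * s = s - s / 2 by ring, sin_add, sin_sub]
    ring
  simp only [h]
  rw [integral_sub ((by fun_prop : Continuous _).intervalIntegrable _ _)
      ((by fun_prop : Continuous _).intervalIntegrable _ _),
    integral_comp_mul_left (fun s ↦ sin s) (by norm_num),
    integral_comp_mul_left (fun s ↦ sin s) (by norm_num)]
  have h3 : 3 / 2 * (2 * π) = π + 2 * π := by ring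
  simp [h3]
  norm_num

theorem integral_two_mul_sin_half_mul_sin :
    ∫ s in (0)..2 * π, 2 * sin (s / 2) * sin s = 0 := by
  have h : ∀ s : ℝ, 2 * sin (s / 2) * sin s = cos (1 / 2 * s) - cos (3 / 2 * s) := fun s ↦ by
    rw [show 3 / 2 * s = s + s / 2 by ring, show 1 / 2 * s = s - s / 2 by ring, cos_add, cos_sub]
    ring
  simp only [h]
  rw [integral_sub ((by fun_prop : Continuous _).intervalIntegrable _ _)
      ((by fun_prop : Continuous _).intervalIntegrable _ _),
    integral_comp_mul_left (fun s ↦ cos s) (by norm_num),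
    integral_comp_mul_left (fun s ↦ cos s) (by norm_num)]
  have h3 : 3 / 2 * (2 * π) = π + 2 * π := by ring
  simp [h3]

theorem intervalIntegral_norm_circleVec_sub_smul (α : ℝ) :
    ∫ s in (0)..2 * π, ‖circleVec s - circleVec α‖ • circleVec s =
      (-(8 / 3) : ℝ) • circleVec α := by
  have hper : Function.Periodic (fun s ↦ ‖circleVec s - circleVec α‖ • circleVec s) (2 * π) :=
    fun s ↦ by simp only [periodic_circleVec s]
  have hshift := hper.intervalIntegral_comp_add_right 0 0 α
  rw [zero_add] at hshift
  have hpt : ∀ s ∈ uIcc 0 (2 * π), ‖circleVec (s + α) - circleVec α‖ • circleVec (s + α) =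
      (2 * sin (s / 2) * cos s) • circleVec α +
        (2 * sin (s / 2) * sin s) • circleVec (α + π / 2) := by
    intro s hs
    rw [uIcc_of_le (by positivity)] at hs
    have hsin : 0 ≤ sin (s / 2) :=
      sin_nonneg_of_nonneg_of_le_pi (by linarith [hs.1]) (by linarith [hs.2])
    rw [norm_circleVec_sub, add_sub_cancel_right, abs_of_nonneg hsin, circleVec_add, smul_add,
      smul_smul, smul_smul]
  rw [← hshift, integral_congr hpt,
    integral_add ((by fun_prop : Continuous _).intervalIntegrable _ _)
      ((by fun_prop : Continuous _).intervalIntegrable _ _),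
    intervalIntegral.integral_smul_const, intervalIntegral.integral_smul_const,
    integral_two_mul_sin_half_mul_cos, integral_two_mul_sin_half_mul_sin, zero_smul, add_zero]

theorem inner_circleVec_smul_add_inner_circleVec_add_pi_div_two_smul (s : ℝ) (w : ℝ²) :
    ⟪circleVec s, w⟫ • circleVec s + ⟪circleVec (s + π / 2), w⟫ • circleVec (s + π / 2) = w := by
  ext i; fin_cases i
  · simp [PiLp.inner_apply, Fin.sum_univ_two, cos_add_pi_div_two, sin_add_pi_div_two]
    linear_combination w 0 * sin_sq_add_cos_sq s
  · simp [PiLp.inner_apply, Fin.sum_univ_two, cos_add_pi_div_two, sin_add_pi_div_two]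
    linear_combination w 1 * sin_sq_add_cos_sq s

theorem intervalIntegral_inner_circleVec_smul (w : ℝ²) :
    ∫ s in (0)..2 * π, ⟪circleVec s, w⟫ • circleVec s = π • w := by
  set f := fun s ↦ ⟪circleVec s, w⟫ • circleVec s
  have hf : Continuous f := by fun_prop
  have hper : Function.Periodic f (2 * π) := fun s ↦ by simp only [f, periodic_circleVec s]
  have hshift := hper.intervalIntegral_comp_add_right 0 0 (π / 2)
  rw [zero_add] at hshift
  refine smul_right_injective ℝ² (two_ne_zero (α := ℝ)) ?_
  calc (2 : ℝ) • ∫ s in (0)..2 * π, f s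
      = (∫ s in (0)..2 * π, f s) + ∫ s in (0)..2 * π, f (s + π / 2) := by rw [two_smul, hshift]
    _ = ∫ s in (0)..2 * π, w := by
      rw [← integral_add (hf.intervalIntegrable _ _)
        ((by fun_prop : Continuous fun s ↦ f (s + π / 2)).intervalIntegrable _ _)]
      simp only [f, inner_circleVec_smul_add_inner_circleVec_add_pi_div_two_smul]
    _ = (2 : ℝ) • π • w := by rw [intervalIntegral.integral_const, sub_zero, smul_smul]

theorem integral_norm_sub_smul_toSphere {θ₀ : ℝ²} (hθ₀ : θ₀ ∈ sphere (0 : ℝ²) 1) :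
    ∫ θ : sphere (0 : ℝ²) 1, ‖(θ : ℝ²) - θ₀‖ • (θ : ℝ²) ∂(volume : Measure ℝ²).toSphere =
      (-(8 / 3) : ℝ) • θ₀ := by
  obtain ⟨α, rfl⟩ := exists_eq_circleVec hθ₀
  rw [integral_toSphere_eq_intervalIntegral fun θ ↦ ‖θ - circleVec α‖ • θ,
    intervalIntegral_norm_circleVec_sub_smul]

theorem integral_norm_sub_mul_inner_smul_toSphere {θ₀ : ℝ²} (hθ₀ : θ₀ ∈ sphere (0 : ℝ²) 1)
    (w : ℝ²) :
    ∫ θ : sphere (0 : ℝ²) 1, (‖(θ : ℝ²) - θ₀‖ * ⟪θ₀, w⟫) • (θ : ℝ²)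
        ∂(volume : Measure ℝ²).toSphere = (-(8 / 3) : ℝ) • ⟪θ₀, w⟫ • θ₀ := by
  simp_rw [mul_comm _ ⟪θ₀, w⟫, mul_smul]
  rw [MeasureTheory.integral_smul, integral_norm_sub_smul_toSphere hθ₀, smul_comm]

theorem integral_inner_smul_toSphere (w : ℝ²) :
    ∫ θ : sphere (0 : ℝ²) 1, ⟪(θ : ℝ²), w⟫ • (θ : ℝ²) ∂(volume : Measure ℝ²).toSphere = π • w := by
  rw [integral_toSphere_eq_intervalIntegral fun θ ↦ ⟪θ, w⟫ • θ,
    intervalIntegral_inner_circleVec_smul]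

end

/-- In `ℝ²`, for a fixed unit vector `θ₂`,
`∫_S |θ₁ - θ₂| θ₁ dθ₁ = -(8/3) θ₂`, and consequently for any `w ∈ ℝ²`,
`∫_S ∫_S |θ₁-θ₂| (θ₂·w) θ₁ dθ₁ dθ₂ = -(8π/3) w`. -/
theorem collision_integral_unitCircle (w : EuclideanSpace ℝ (Fin 2)) :
    (∀ θ₂ : sphere (0 : EuclideanSpace ℝ (Fin 2)) 1,
      (∫ θ₁ : sphere (0 : EuclideanSpace ℝ (Fin 2)) 1,
        ‖(θ₁ : EuclideanSpace ℝ (Fin 2)) - (θ₂ : EuclideanSpace ℝ (Fin 2))‖ •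
          (θ₁ : EuclideanSpace ℝ (Fin 2)) ∂(volume.toSphere))
        = (-(8 / 3) : ℝ) • (θ₂ : EuclideanSpace ℝ (Fin 2))) ∧
    (∫ θ₂ : sphere (0 : EuclideanSpace ℝ (Fin 2)) 1,
      (∫ θ₁ : sphere (0 : EuclideanSpace ℝ (Fin 2)) 1,
        (‖(θ₁ : EuclideanSpace ℝ (Fin 2)) - (θ₂ : EuclideanSpace ℝ (Fin 2))‖ *
          ⟪(θ₂ : EuclideanSpace ℝ (Fin 2)), w⟫) • (θ₁ : EuclideanSpace ℝ (Fin 2))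
        ∂(volume.toSphere)) ∂(volume.toSphere))
      = (-(8 * π / 3) : ℝ) • w := by
  refine ⟨fun θ₂ ↦ integral_norm_sub_smul_toSphere θ₂.2, ?_⟩
  rw [integral_congr_ae (ae_of_all _ fun θ₂ ↦ integral_norm_sub_mul_inner_smul_toSphere θ₂.2 w),
    MeasureTheory.integral_smul, integral_inner_smul_toSphere, smul_smul]
  congr 1
  ring
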